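/- Let M be a loopless matroid of rank d+1 (with d ≥ 1) on a finite ground set E, let C be a circuit of M, and let e, f be two distinct elements of C. Then there exists a chain F_1 ⊊ F_2 ⊊ ⋯ ⊊ F_d of proper flats of M with rk_M(F_i) = i for each i, such that for every i either both e and f belong to F_i or neither does. -/

import Mathlib

/-- A circuit of a matroid is a minimal dependent set. -/
def Matroid.Circuit {α : Type*} (M : Matroid α) (C : Set α) : Prop :=
  M.Dep C ∧ ∀ D ⊂ C, ¬ M.Dep D

/-- A matroid is loopless if every singleton contained in the ground set is independent. -/
def Matroid.Loopless' {α : Type*} (M : Matroid α) : Prop :=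
  ∀ e ∈ M.E, M.Indep {e}

/-- The rank of a set `X` in a matroid: the supremum of the cardinalities of the
independent sets contained in `X`. -/
noncomputable def Matroid.rk {α : Type*} (M : Matroid α) (X : Set α) : ℕ :=
  sSup {n : ℕ | ∃ I, M.Indep I ∧ I ⊆ X ∧ I.ncard = n}

/-!
Extend `C \ {e}` to a base `B` and enumerate `B` as `C \ {e, f}`, then `f`, then the rest.
The closures of the initial segments form a full flag. A segment inside `C \ {e, f}` spans
neither `e` nor `f`, since adding either one still gives a proper subset of `C`; a segment
containing `C \ {e}` contains `f` and spans `e`.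
-/

open Set

namespace List

variable {α : Type*}

lemma ncard_setOf_mem {l : List α} (hl : l.Nodup) : {x | x ∈ l}.ncard = l.length := by
  classical
  rw [← coe_toFinset, ncard_coe_finset, toFinset_card_of_nodup hl]

lemma ncard_setOf_mem_take {l : List α} (hl : l.Nodup) (k : ℕ) :
    {x | x ∈ l.take k}.ncard = min k l.length := by
  rw [ncard_setOf_mem (hl.sublist (take_sublist k l)), length_take]

lemma monotone_setOf_mem_take (l : List α) : Monotone fun k ↦ {x | x ∈ l.take k} :=
  fun _ _ hjk _ hx ↦ (take_prefix_take_left hjk).subset hx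

lemma setOf_mem_take_append_cons_subset_or (l₁ l₂ : List α) (a : α) (k : ℕ) :
    {x | x ∈ (l₁ ++ a :: l₂).take k} ⊆ {x | x ∈ l₁} ∨
      insert a {x | x ∈ l₁} ⊆ {x | x ∈ (l₁ ++ a :: l₂).take k} := by
  rcases le_or_gt k l₁.length with hk | hk
  · left
    intro x hx
    rw [mem_ofPred_eq, take_append_of_le_length hk] at hx
    exact take_subset k l₁ hx
  · right
    obtain ⟨m, hm⟩ : ∃ m, k - l₁.length = m + 1 := ⟨k - l₁.length - 1, by omega⟩
    rw [take_append, take_of_length_le hk.le, hm, take_succ_cons]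
    rintro x (rfl | hx)
    · simp
    · exact mem_append_left _ hx

end List

namespace Set.Finite

variable {α : Type*} {A B : Set α} {a : α}

lemma exists_monotone_chain_through (hB : B.Finite) (hAB : A ⊆ B) (ha : a ∈ A) :
    ∃ T : ℕ → Set α, Monotone T ∧ (∀ k, T k ⊆ B) ∧ (∀ k, (T k).ncard = min k B.ncard) ∧
      ∀ k, T k ⊆ A \ {a} ∨ A ⊆ T k := by
  obtain ⟨s₁, hs₁⟩ := (hB.subset (sdiff_subset.trans hAB) : (A \ {a}).Finite).exists_finset_coe
  obtain ⟨s₂, hs₂⟩ := (hB.subset sdiff_subset : (B \ A).Finite).exists_finset_coe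
  set L := s₁.toList ++ a :: s₂.toList
  have hL : {x | x ∈ L} = B := by
    ext x
    simp only [L, mem_ofPred_eq, List.mem_append, List.mem_cons, Finset.mem_toList,
      ← Finset.mem_coe, hs₁, hs₂]
    constructor
    · rintro (⟨hx, -⟩ | rfl | ⟨hx, -⟩)
      exacts [hAB hx, hAB ha, hx]
    · intro hx
      by_cases hxA : x ∈ A
      · obtain rfl | hxa := eq_or_ne x a
        exacts [Or.inr (Or.inl rfl), Or.inl ⟨hxA, hxa⟩]
      · exact Or.inr (Or.inr ⟨hx, hxA⟩)
  have hLnd : L.Nodup := by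
    refine List.nodup_append.2 ⟨s₁.nodup_toList, List.nodup_cons.2 ⟨?_, s₂.nodup_toList⟩, ?_⟩
    · rw [Finset.mem_toList, ← Finset.mem_coe, hs₂]
      exact fun h ↦ h.2 ha
    · rintro x hx y hy rfl
      rw [Finset.mem_toList, ← Finset.mem_coe, hs₁] at hx
      rcases List.mem_cons.1 hy with rfl | hy
      · exact hx.2 rfl
      · rw [Finset.mem_toList, ← Finset.mem_coe, hs₂] at hy
        exact hy.2 hx.1
  refine ⟨fun k ↦ {x | x ∈ L.take k}, L.monotone_setOf_mem_take, fun k x hx ↦ ?_, fun k ↦ ?_,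
    fun k ↦ ?_⟩
  · exact hL ▸ List.take_subset k L hx
  · rw [List.ncard_setOf_mem_take hLnd, ← hL, List.ncard_setOf_mem hLnd]
  · have h₁ : {x | x ∈ s₁.toList} = A \ {a} := by simp [← hs₁]
    have h := List.setOf_mem_take_append_cons_subset_or s₁.toList s₂.toList a k
    rwa [h₁, insert_sdiff_singleton, insert_eq_of_mem ha] at h

end Set.Finite

namespace Matroid

variable {α : Type*} {M : Matroid α} {C I X : Set α} {e f : α}

lemma Circuit.isCircuit (hC : M.Circuit C) : M.IsCircuit C :=
  isCircuit_iff_forall_ssubset.2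
    ⟨hC.1, fun _ hD ↦ (not_dep_iff (hD.subset.trans hC.1.subset_ground)).1 (hC.2 _ hD)⟩

lemma IsBasis.rk_eq_ncard [M.RankFinite] (hI : M.IsBasis I X) : M.rk X = I.ncard := by
  refine IsGreatest.csSup_eq ⟨⟨I, hI.indep, hI.subset, rfl⟩, ?_⟩
  rintro _ ⟨J, hJ, hJX, rfl⟩
  have hJI : J.encard ≤ I.ncard := by
    rw [hI.indep.finite.cast_ncard_eq, hI.encard_eq_eRk]
    exact hJ.encard_le_eRk_of_subset hJX
  exact (encard_le_coe_iff_finite_ncard_le.1 hJI).2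

lemma IsCircuit.notMem_closure_of_subset_sdiff (hC : M.IsCircuit C) (he : e ∈ C) (hf : f ∈ C)
    (hef : e ≠ f) (hX : X ⊆ (C \ {e}) \ {f}) : e ∉ M.closure X := by
  have hXe : insert e X ⊆ C \ {f} :=
    insert_subset ⟨he, hef⟩ (hX.trans (Set.sdiff_sdiff_comm.subset.trans sdiff_subset))
  have heX : e ∉ X := fun h ↦ (hX h).1.2 rfl
  have hind := (hC.sdiff_singleton_indep hf).subset hXe
  exact (((hind.subset (subset_insert e X)).insert_indep_iff_of_notMem heX).1 hind).2

lemma IsCircuit.mem_closure_iff_mem_closure (hC : M.IsCircuit C) (he : e ∈ C) (hf : f ∈ C)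
    (hef : e ≠ f) (hX : X ⊆ (C \ {e}) \ {f} ∨ C \ {e} ⊆ X) :
    e ∈ M.closure X ↔ f ∈ M.closure X := by
  rcases hX with hX | hX
  · refine iff_of_false (hC.notMem_closure_of_subset_sdiff he hf hef hX)
      (hC.notMem_closure_of_subset_sdiff hf he hef.symm ?_)
    rwa [Set.sdiff_sdiff_comm]
  · refine iff_of_true ?_ (M.mem_closure_of_mem' (hX ⟨hf, hef.symm⟩) (hC.subset_ground hf))
    exact M.closure_subset_closure hX (hC.mem_closure_sdiff_singleton_of_mem he)

end Matroid

theorem exists_full_flag_not_separating_circuit_pair_general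
    {α : Type*} {M : Matroid α} (hfin : M.E.Finite)
    {d : ℕ} (hrk : M.rk M.E = d + 1)
    {C : Set α} (hC : M.Circuit C) {e f : α} (he : e ∈ C) (hf : f ∈ C) (hef : e ≠ f) :
    ∃ F : Fin d → Set α, StrictMono F ∧ (∀ i, M.IsFlat (F i)) ∧ (∀ i, F i ≠ M.E) ∧
      (∀ i : Fin d, M.rk (F i) = (i : ℕ) + 1) ∧
      ∀ i, (e ∈ F i ∧ f ∈ F i) ∨ (e ∉ F i ∧ f ∉ F i) := by
  have : M.Finite := ⟨hfin⟩
  have hC := hC.isCircuit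
  obtain ⟨B, hB, hCB⟩ := (hC.sdiff_singleton_indep he).exists_isBase_superset
  obtain ⟨T, hTmono, hTB, hTcard, hTC⟩ :=
    (hfin.subset hB.subset_ground).exists_monotone_chain_through hCB ⟨hf, hef.symm⟩
  have hBcard : B.ncard = d + 1 := hB.isBasis_ground.rk_eq_ncard ▸ hrk
  have hrkF (i : Fin d) : M.rk (M.closure (T (i + 1))) = i + 1 := by
    rw [(hB.indep.subset (hTB _)).isBasis_closure.rk_eq_ncard, hTcard, hBcard,
      min_eq_left (by omega)]
  refine ⟨fun i ↦ M.closure (T (i + 1)), ?_, fun i ↦ M.isFlat_closure _,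
    fun i (hi : M.closure _ = M.E) ↦ ?_, hrkF, fun i ↦ ?_⟩
  · refine Monotone.strictMono_of_injective
      (fun i j hij ↦ M.closure_subset_closure (hTmono (by simpa using hij)))
      fun i j (hij : M.closure _ = M.closure _) ↦
        Fin.ext (by simpa [hrkF] using congrArg M.rk hij)
  · have := hrkF i
    rw [hi, hrk] at this
    omega
  · rw [← iff_iff_and_or_not_and_not]
    exact hC.mem_closure_iff_mem_closure he hf hef (hTC (i + 1))

/-- If `C` is a circuit of a loopless matroid `M` of rank `d + 1`
(`d ≥ 1`) on a finite ground set and `e ≠ f` are elements of `C`, then there is a full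
flag `F 0 ⊊ ⋯ ⊊ F (d-1)` of proper flats with `rk (F i) = i + 1` such that each flat of
the flag contains either both of `e, f` or neither of them. -/
theorem exists_full_flag_not_separating_circuit_pair
    {α : Type*} {M : Matroid α} (hfin : M.E.Finite) (hloop : M.Loopless')
    {d : ℕ} (hd : 1 ≤ d) (hrk : M.rk M.E = d + 1)
    {C : Set α} (hC : M.Circuit C) {e f : α} (he : e ∈ C) (hf : f ∈ C) (hef : e ≠ f) :
    ∃ F : Fin d → Set α, StrictMono F ∧ (∀ i, M.IsFlat (F i)) ∧ (∀ i, F i ≠ M.E) ∧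
      (∀ i : Fin d, M.rk (F i) = (i : ℕ) + 1) ∧
      ∀ i, (e ∈ F i ∧ f ∈ F i) ∨ (e ∉ F i ∧ f ∉ F i) :=
  exists_full_flag_not_separating_circuit_pair_general hfin hrk hC he hf hef
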